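/- arXiv:2003.07735 — 2 statements merged into one kernel-verified Lean document; each statement's English description precedes it below -/
import Mathlib

section
/- Suppose the matrix A has rank one, i.e. (a_1 d_0 + b_0 b_1)(a_0 d_1 + c_0 c_1) = (a_0 b_1 + a_1 c_0)(b_0 d_1 + c_1 d_0). If R = K·(a_1 d_0 + b_0 b_1 + K(a_0 b_1 + a_1 c_0)) / ((b_0 + K a_0)(d_0 + K c_0)) < 1, where K = (b_0 d_1 + c_1 d_0)/(a_1 d_0 + b_0 b_1), then x_{2n} → 0, x_{2n+1} → ∞, y_{2n} → 0 and y_{2n+1} → ∞ as n → ∞. -/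
open Finset Filter Topology

/-!
Writing `u = 1/x`, `v = 1/y`, one step of the system is linear in `(u, v)`, and two steps give
`(x₂, y₂) = A (v, u) / (x₁ y₁)`. When `A` has rank one its second row is `K` times its first, so
`y = K x` at every positive even time. On the line `y = K x` the two-step map is the linear
contraction `x ↦ R x`, hence `x (2n), y (2n) → 0` geometrically, and the odd terms, of size
`a₀ / x (2n) + b₀ / y (2n)`, blow up.
-/

noncomputable def step (a b c d : ℝ) (p : ℝ × ℝ) : ℝ × ℝ :=
  (a / p.1 + b / p.2, c / p.1 + d / p.2)

theorem Function.Periodic.apply_two_mul_add {α : Type*} {f : ℕ → α} (h : Function.Periodic f 2)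
    (m r : ℕ) : f (2 * m + r) = f r := by
  simpa [add_comm, mul_comm] using h.nat_mul m r

theorem Function.Periodic.apply_two_mul {α : Type*} {f : ℕ → α} (h : Function.Periodic f 2)
    (m : ℕ) : f (2 * m) = f 0 := by
  simpa using h.apply_two_mul_add m 0

theorem pos_of_recurrence {x y a b c d : ℕ → ℝ} (hx0 : 0 < x 0) (hy0 : 0 < y 0)
    (ha : ∀ n, 0 < a n) (hb : ∀ n, 0 < b n) (hc : ∀ n, 0 < c n) (hd : ∀ n, 0 < d n)
    (hxrec : ∀ n, x (n + 1) = a n / x n + b n / y n)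
    (hyrec : ∀ n, y (n + 1) = c n / x n + d n / y n) (n : ℕ) : 0 < x n ∧ 0 < y n := by
  induction n with
  | zero => exact ⟨hx0, hy0⟩
  | succ n ih =>
    have := ha n; have := hb n; have := hc n; have := hd n
    obtain ⟨hx, hy⟩ := ih
    rw [hxrec, hyrec]
    exact ⟨by positivity, by positivity⟩

theorem rank_one_rows {p q r s K : ℝ} (hp : p ≠ 0) (hdet : p * s = q * r) (hK : K = r / p) :
    K * p = r ∧ K * q = s := by
  subst hK
  refine ⟨div_mul_cancel₀ r hp, mul_left_cancel₀ hp ?_⟩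
  field_simp
  linear_combination -hdet

section TwoStep

variable {a₀ b₀ c₀ d₀ a₁ b₁ c₁ d₁ K : ℝ}

theorem snd_step_step_eq_mul_fst (ha₀ : 0 < a₀) (hb₀ : 0 < b₀) (hc₀ : 0 < c₀) (hd₀ : 0 < d₀)
    (hrow₁ : K * (a₁ * d₀ + b₀ * b₁) = b₀ * d₁ + c₁ * d₀)
    (hrow₂ : K * (a₀ * b₁ + a₁ * c₀) = a₀ * d₁ + c₀ * c₁) {p : ℝ × ℝ} (hp₁ : 0 < p.1)
    (hp₂ : 0 < p.2) :
    (step a₁ b₁ c₁ d₁ (step a₀ b₀ c₀ d₀ p)).2 = K * (step a₁ b₁ c₁ d₁ (step a₀ b₀ c₀ d₀ p)).1 := by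
  obtain ⟨u, v⟩ := p
  simp only [step] at *
  have : 0 < a₀ / u + b₀ / v := by positivity
  have : 0 < c₀ / u + d₀ / v := by positivity
  field_simp
  linear_combination (-u) * hrow₁ - v * hrow₂

theorem fst_step_step_of_snd_eq (ha₀ : 0 < a₀) (hb₀ : 0 < b₀) (hc₀ : 0 < c₀) (hd₀ : 0 < d₀)
    (hK : 0 < K) {p : ℝ × ℝ} (hp₁ : 0 < p.1) (hp : p.2 = K * p.1) :
    (step a₁ b₁ c₁ d₁ (step a₀ b₀ c₀ d₀ p)).1 =
      K * (a₁ * d₀ + b₀ * b₁ + K * (a₀ * b₁ + a₁ * c₀)) / ((b₀ + K * a₀) * (d₀ + K * c₀)) *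
        p.1 := by
  obtain ⟨u, v⟩ := p
  simp only [step] at *
  subst hp
  field_simp
  ring

end TwoStep

theorem tendsto_zero_of_eq_mul {u : ℕ → ℝ} {r : ℝ} (hr₀ : 0 ≤ r) (hr₁ : r < 1)
    (hu : ∀ n, u (n + 1) = r * u n) : Tendsto u atTop (𝓝 0) := by
  have hgeom : u = fun n => u 0 * r ^ n := funext fun n => by
    induction n with
    | zero => simp
    | succ n ih => rw [hu, ih, pow_succ]; ring
  rw [hgeom]
  simpa using (tendsto_pow_atTop_nhds_zero_of_lt_one hr₀ hr₁).const_mul (u 0)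

theorem tendsto_div_add_div_atTop {ι : Type*} {l : Filter ι} {u v : ι → ℝ} {p q : ℝ} (hp : 0 < p)
    (hq : 0 ≤ q) (hu : Tendsto u l (𝓝 0)) (hu₀ : ∀ i, 0 < u i) (hv₀ : ∀ i, 0 ≤ v i) :
    Tendsto (fun i => p / u i + q / v i) l atTop := by
  have hu' : Tendsto u l (𝓝[>] 0) :=
    tendsto_nhdsWithin_of_tendsto_nhds_of_eventually_within _ hu (Eventually.of_forall hu₀)
  simp only [div_eq_mul_inv p]
  exact (hu'.inv_tendsto_nhdsGT_zero.const_mul_atTop hp).atTop_add_nonneg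
    fun i => div_nonneg hq (hv₀ i)

section Recurrence

variable {x y a b c d : ℕ → ℝ}

theorem pair_succ_of_recurrence (hxrec : ∀ n, x (n + 1) = a n / x n + b n / y n)
    (hyrec : ∀ n, y (n + 1) = c n / x n + d n / y n) (n : ℕ) :
    (x (n + 1), y (n + 1)) = step (a n) (b n) (c n) (d n) (x n, y n) :=
  Prod.ext (hxrec n) (hyrec n)

theorem odd_pair_of_recurrence (hxrec : ∀ n, x (n + 1) = a n / x n + b n / y n)
    (hyrec : ∀ n, y (n + 1) = c n / x n + d n / y n) (ha : Function.Periodic a 2)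
    (hb : Function.Periodic b 2) (hc : Function.Periodic c 2) (hd : Function.Periodic d 2)
    (m : ℕ) :
    (x (2 * m + 1), y (2 * m + 1)) = step (a 0) (b 0) (c 0) (d 0) (x (2 * m), y (2 * m)) := by
  rw [← ha.apply_two_mul m, ← hb.apply_two_mul m, ← hc.apply_two_mul m, ← hd.apply_two_mul m]
  exact pair_succ_of_recurrence hxrec hyrec (2 * m)

theorem even_pair_of_recurrence (hxrec : ∀ n, x (n + 1) = a n / x n + b n / y n)
    (hyrec : ∀ n, y (n + 1) = c n / x n + d n / y n) (ha : Function.Periodic a 2)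
    (hb : Function.Periodic b 2) (hc : Function.Periodic c 2) (hd : Function.Periodic d 2)
    (m : ℕ) : (x (2 * (m + 1)), y (2 * (m + 1))) =
      step (a 1) (b 1) (c 1) (d 1) (step (a 0) (b 0) (c 0) (d 0) (x (2 * m), y (2 * m))) := by
  rw [← odd_pair_of_recurrence hxrec hyrec ha hb hc hd, ← ha.apply_two_mul_add m 1,
    ← hb.apply_two_mul_add, ← hc.apply_two_mul_add, ← hd.apply_two_mul_add]
  exact pair_succ_of_recurrence hxrec hyrec (2 * m + 1)

end Recurrence

theorem stmt_9
    (x y a b c d : ℕ → ℝ)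
    (hx0 : 0 < x 0) (hy0 : 0 < y 0)
    (hapos : ∀ n, 0 < a n) (hbpos : ∀ n, 0 < b n)
    (hcpos : ∀ n, 0 < c n) (hdpos : ∀ n, 0 < d n)
    (haper : ∀ n, a (n + 2) = a n) (hbper : ∀ n, b (n + 2) = b n)
    (hcper : ∀ n, c (n + 2) = c n) (hdper : ∀ n, d (n + 2) = d n)
    (hxrec : ∀ n, x (n + 1) = a n / x n + b n / y n)
    (hyrec : ∀ n, y (n + 1) = c n / x n + d n / y n)
    (hrank : (a 1 * d 0 + b 0 * b 1) * (a 0 * d 1 + c 0 * c 1) =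
      (a 0 * b 1 + a 1 * c 0) * (b 0 * d 1 + c 1 * d 0))
    (K : ℝ) (hK : K = (b 0 * d 1 + c 1 * d 0) / (a 1 * d 0 + b 0 * b 1))
    (M : ℝ) (hM : M = a 1 * d 0 + b 0 * b 1 + K * (a 0 * b 1 + a 1 * c 0))
    (R : ℝ) (hR : R = K * M / ((b 0 + K * a 0) * (d 0 + K * c 0)))
    (hRlt : R < 1)
    : Tendsto (fun n => x (2 * n)) atTop (nhds 0) ∧
      Tendsto (fun n => x (2 * n + 1)) atTop atTop ∧
      Tendsto (fun n => y (2 * n)) atTop (nhds 0) ∧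
      Tendsto (fun n => y (2 * n + 1)) atTop atTop := by
  have ha₀ := hapos 0; have ha₁ := hapos 1; have hb₀ := hbpos 0; have hb₁ := hbpos 1
  have hc₀ := hcpos 0; have hc₁ := hcpos 1; have hd₀ := hdpos 0; have hd₁ := hdpos 1
  have hpos := pos_of_recurrence hx0 hy0 hapos hbpos hcpos hdpos hxrec hyrec
  have heven := even_pair_of_recurrence hxrec hyrec haper hbper hcper hdper
  have hodd := odd_pair_of_recurrence hxrec hyrec haper hbper hcper hdper
  have hKpos : 0 < K := hK ▸ by positivity
  obtain ⟨hrow₁, hrow₂⟩ := rank_one_rows (by positivity) hrank hK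
  have hline (m : ℕ) : y (2 * (m + 1)) = K * x (2 * (m + 1)) := by
    have := snd_step_step_eq_mul_fst (p := (x (2 * m), y (2 * m))) ha₀ hb₀ hc₀ hd₀ hrow₁ hrow₂
      (hpos (2 * m)).1 (hpos (2 * m)).2
    rwa [← heven m] at this
  have hcontract (m : ℕ) : x (2 * (m + 1 + 1)) = R * x (2 * (m + 1)) := by
    have := fst_step_step_of_snd_eq (a₁ := a 1) (b₁ := b 1) (c₁ := c 1) (d₁ := d 1)
      (p := (x (2 * (m + 1)), y (2 * (m + 1))))
      ha₀ hb₀ hc₀ hd₀ hKpos (hpos _).1 (hline m)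
    rwa [← heven (m + 1), ← hM, ← hR] at this
  have hR₀ : 0 ≤ R := hR ▸ hM ▸ by positivity
  have hx : Tendsto (fun m => x (2 * (m + 1))) atTop (𝓝 0) :=
    tendsto_zero_of_eq_mul hR₀ hRlt hcontract
  have hxeven := (tendsto_add_atTop_iff_nat (f := fun n => x (2 * n)) 1).1 hx
  have hyeven : Tendsto (fun n => y (2 * n)) atTop (𝓝 0) :=
    (tendsto_add_atTop_iff_nat (f := fun n => y (2 * n)) 1).1 <| by
      simpa [hline] using hx.const_mul K
  refine ⟨hxeven, ?_, hyeven, ?_⟩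
  · exact (tendsto_div_add_div_atTop ha₀ hb₀.le hxeven (fun n => (hpos _).1)
      fun n => (hpos _).2.le).congr fun m => (congrArg Prod.fst (hodd m)).symm
  · exact (tendsto_div_add_div_atTop hc₀ hd₀.le hxeven (fun n => (hpos _).1)
      fun n => (hpos _).2.le).congr fun m => (congrArg Prod.snd (hodd m)).symm
end

section
/- Suppose the matrix A is invertible (rank two). If C_1 λ_1 / C_3 − (b_0 C_1/C_3 + a_0)(d_0 C_1/C_3 + c_0) > 0, then x_{2n} → ∞, x_{2n+1} → 0, y_{2n} → ∞ and y_{2n+1} → 0 as n → ∞. -/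
/-!
The ratio `r n = x n / y n` is moved by the Möbius map of `!![b n, a n; d n, c n]`, so `r (2 * k)`
is iterated by the Möbius map of the product matrix `A`, whose entries are positive. Its fixed
points are the slopes `L > 0 > L'` of the two eigenvectors of `A`, and in the coordinate
`(r - L) / (r - L')` the map is multiplication by `λ₂ / λ₁`, of modulus `< 1`; hence
`r (2 * k) → L`, and `L = C₁ / C₃`. Since `x (n + 1) * x n = a n + b n * r n`, the quotient
`x (2 * k + 2) / x (2 * k)` tends to `λ₁ L / ((b₀ L + a₀) (d₀ L + c₀))`, which exceeds `1` by
hypothesis. So `x (2 * k)` grows geometrically, and the other three limits follow from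
`x (2 * k + 1) * x (2 * k) → a₀ + b₀ L` and `r (2 * k + 1) → (b₀ L + a₀) / (d₀ L + c₀) > 0`.
-/

open Filter Topology

/-- The larger eigenvalue of `!![p, q; u, s]`. -/
noncomputable def perronRoot (p q u s : ℝ) : ℝ := (p + s + √((p - s) ^ 2 + 4 * q * u)) / 2

noncomputable def perronSlope (p q u s : ℝ) : ℝ := q / (perronRoot p q u s - p)

section PerronRoot

variable {p q u s : ℝ}

theorem left_lt_perronRoot (hqu : 0 < q * u) : p < perronRoot p q u s := by
  have := Real.lt_sqrt_of_sq_lt (x := p - s) (y := (p - s) ^ 2 + 4 * q * u) (by linarith)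
  unfold perronRoot
  linarith

theorem right_lt_perronRoot (hqu : 0 < q * u) : s < perronRoot p q u s := by
  have := Real.lt_sqrt_of_sq_lt (x := s - p) (y := (p - s) ^ 2 + 4 * q * u) (by nlinarith)
  unfold perronRoot
  linarith

theorem perronRoot_sub_mul_perronRoot_sub (hqu : 0 ≤ q * u) :
    (perronRoot p q u s - p) * (perronRoot p q u s - s) = q * u := by
  have := Real.sq_sqrt (x := (p - s) ^ 2 + 4 * q * u) (by nlinarith [sq_nonneg (p - s)])
  unfold perronRoot
  linear_combination this / 4

theorem perronSlope_pos (hq : 0 < q) (hu : 0 < u) : 0 < perronSlope p q u s :=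
  div_pos hq (sub_pos.2 (left_lt_perronRoot (mul_pos hq hu)))

theorem mul_perronSlope_add_eq_perronRoot_mul (hqu : 0 < q * u) :
    p * perronSlope p q u s + q = perronRoot p q u s * perronSlope p q u s := by
  have := (sub_pos.2 (left_lt_perronRoot (p := p) (s := s) hqu)).ne'
  unfold perronSlope
  field_simp
  ring

theorem mul_perronSlope_add_eq_perronRoot (hqu : 0 < q * u) :
    u * perronSlope p q u s + s = perronRoot p q u s := by
  have := (sub_pos.2 (left_lt_perronRoot (p := p) (s := s) hqu)).ne'
  unfold perronSlope
  field_simp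
  linear_combination -perronRoot_sub_mul_perronRoot_sub hqu.le

end PerronRoot

/-- The Möbius map of `!![p, q; u, s]`. -/
noncomputable def mobius (p q u s r : ℝ) : ℝ := (p * r + q) / (u * r + s)

section Mobius

variable {p q u s : ℝ}

theorem mobius_mobius {p' q' u' s' r : ℝ} (hr : u' * r + s' ≠ 0) :
    mobius p q u s (mobius p' q' u' s' r) =
      mobius (p * p' + q * u') (p * q' + q * s') (u * p' + s * u') (u * q' + s * s') r := by
  simp only [mobius]
  rw [mul_div_assoc', mul_div_assoc', div_add' _ _ _ hr, div_add' _ _ _ hr,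
    div_div_div_cancel_right₀ hr]
  ring_nf

theorem Filter.Tendsto.mobius {α : Type*} {l : Filter α} {f : α → ℝ} {t : ℝ}
    (hf : Tendsto f l (𝓝 t)) (ht : u * t + s ≠ 0) :
    Tendsto (fun n => mobius p q u s (f n)) l (𝓝 (mobius p q u s t)) :=
  ((hf.const_mul p).add_const q).div ((hf.const_mul u).add_const s) ht

theorem add_mul_mobius_eq_div {a₀ b₀ c₀ d₀ a₁ b₁ μ L : ℝ}
    (hfix : (a₁ * d₀ + b₀ * b₁) * L + (a₀ * b₁ + a₁ * c₀) = μ * L) (hL : d₀ * L + c₀ ≠ 0) :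
    a₁ + b₁ * mobius b₀ a₀ d₀ c₀ L = μ * L / (d₀ * L + c₀) := by
  have hmob : b₁ * mobius b₀ a₀ d₀ c₀ L * (d₀ * L + c₀) = b₁ * (b₀ * L + a₀) := by
    rw [mobius, mul_assoc, div_mul_cancel₀ _ hL]
  rw [eq_div_iff hL, ← hfix, add_mul, hmob]
  ring

theorem mobius_sub_of_eigen {μ ν L r : ℝ} (hfix : p * L + q = μ * L) (hden : u * L + s = μ)
    (hsum : μ + ν = p + s) (hr : u * r + s ≠ 0) :
    mobius p q u s r - L = ν * (r - L) / (u * r + s) := by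
  rw [mobius, eq_div_iff hr, sub_mul, div_mul_cancel₀ _ hr]
  linear_combination hfix - r * hden - (r - L) * hsum

theorem mobius_sub_div_mobius_sub {μ ν L L' r : ℝ} (hLfix : p * L + q = μ * L)
    (hLden : u * L + s = μ) (hL'fix : p * L' + q = ν * L') (hL'den : u * L' + s = ν)
    (hsum : μ + ν = p + s) (hμ : μ ≠ 0) (hr : u * r + s ≠ 0) (hrL' : r - L' ≠ 0) :
    (mobius p q u s r - L) / (mobius p q u s r - L') = ν / μ * ((r - L) / (r - L')) := by
  rw [mobius_sub_of_eigen hLfix hLden hsum hr,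
    mobius_sub_of_eigen hL'fix hL'den (by rw [add_comm, hsum]) hr, div_div_div_cancel_right₀ hr]
  field_simp

theorem tendsto_of_tendsto_sub_div_sub {r : ℕ → ℝ} {L L' : ℝ} (hLL' : L ≠ L')
    (hr : ∀ n, r n - L' ≠ 0) (h : Tendsto (fun n => (r n - L) / (r n - L')) atTop (𝓝 0)) :
    Tendsto r atTop (𝓝 L) := by
  set e := fun n => (r n - L) / (r n - L')
  have hsolve (n : ℕ) : r n = (L - e n * L') / (1 - e n) := by
    have h1e : 1 - e n = (L - L') / (r n - L') := by
      simp only [e]; field_simp [hr n]; ring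
    rw [h1e, eq_div_iff (div_ne_zero (sub_ne_zero.2 hLL') (hr n))]
    simp only [e]
    field_simp [hr n]
    ring
  have hlim := (tendsto_const_nhds (x := L)).sub (h.mul_const L') |>.div
    ((tendsto_const_nhds (x := (1 : ℝ))).sub h) (by norm_num)
  rw [zero_mul, sub_zero, sub_zero, div_one] at hlim
  exact hlim.congr fun n => (hsolve n).symm

theorem tendsto_mobius_iterate {r : ℕ → ℝ} (hp : 0 ≤ p) (hq : 0 < q) (hu : 0 < u) (hs : 0 < s)
    (hr : ∀ n, 0 ≤ r n) (hrec : ∀ n, r (n + 1) = mobius p q u s (r n)) :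
    Tendsto r atTop (𝓝 (perronSlope p q u s)) := by
  have hqu := mul_pos hq hu
  have hpμ := left_lt_perronRoot (p := p) (s := s) hqu
  have hsμ := right_lt_perronRoot (p := p) (s := s) hqu
  set μ := perronRoot p q u s
  set ν := p + s - μ
  set L' := (p - μ) / u
  have hL'fix : p * L' + q = ν * L' := by
    simp only [L', ν]; field_simp; linear_combination -perronRoot_sub_mul_perronRoot_sub hqu.le
  have hL'den : u * L' + s = ν := by
    simp only [L', ν]; field_simp; ring
  have hL' : L' < 0 := div_neg_of_neg_of_pos (by linarith) hu
  have hrL' (n : ℕ) : r n - L' ≠ 0 := by have := hr n; linarith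
  set e := fun n => (r n - perronSlope p q u s) / (r n - L')
  have he (n : ℕ) : e n = (ν / μ) ^ n * e 0 := by
    induction n with
    | zero => simp
    | succ n ih =>
      have := hr n
      simp only [e] at ih ⊢
      rw [hrec, mobius_sub_div_mobius_sub (mul_perronSlope_add_eq_perronRoot_mul hqu)
        (mul_perronSlope_add_eq_perronRoot hqu) hL'fix hL'den (by ring) (by linarith)
        (by positivity) (hrL' n), ih, pow_succ]
      ring
  have hratio : |ν / μ| < 1 := by
    rw [abs_div, abs_of_pos (by linarith : 0 < μ), div_lt_one (by linarith), abs_lt]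
    constructor <;> linarith
  refine tendsto_of_tendsto_sub_div_sub (by linarith [perronSlope_pos (p := p) (s := s) hq hu])
    hrL' ?_
  simpa [← he] using (tendsto_pow_atTop_nhds_zero_of_abs_lt_one hratio).mul_const (e 0)

end Mobius

theorem tendsto_atTop_of_tendsto_ratio {v : ℕ → ℝ} {ρ : ℝ} (hv : ∀ n, 0 < v n) (hρ : 1 < ρ)
    (h : Tendsto (fun n => v (n + 1) / v n) atTop (𝓝 ρ)) : Tendsto v atTop atTop := by
  obtain ⟨c, hc1, hcρ⟩ := exists_between hρ
  obtain ⟨N, hN⟩ := eventually_atTop.1 (h.eventually (eventually_ge_nhds hcρ))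
  refine (tendsto_add_atTop_iff_nat N).1 (tendsto_atTop_of_geom_le (hv _) hc1 fun n => ?_)
  have := hN (n + N) (by omega)
  rw [le_div_iff₀ (hv _)] at this
  rwa [Nat.add_right_comm]

theorem tendsto_even_atTop_odd_zero {x y : ℕ → ℝ} {α₀ β₀ α₁ β₁ L M : ℝ} (hx : ∀ n, 0 < x n)
    (h₀ : ∀ k, x (2 * k + 1) * x (2 * k) = α₀ + β₀ * (x (2 * k) / y (2 * k)))
    (h₁ : ∀ k, x (2 * k + 2) * x (2 * k + 1) = α₁ + β₁ * (x (2 * k + 1) / y (2 * k + 1)))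
    (hL : Tendsto (fun k => x (2 * k) / y (2 * k)) atTop (𝓝 L))
    (hM : Tendsto (fun k => x (2 * k + 1) / y (2 * k + 1)) atTop (𝓝 M))
    (hL0 : 0 < L) (hM0 : 0 < M) (hα₀ : 0 < α₀ + β₀ * L) (hgrowth : α₀ + β₀ * L < α₁ + β₁ * M) :
    Tendsto (fun k => x (2 * k)) atTop atTop ∧
      Tendsto (fun k => x (2 * k + 1)) atTop (𝓝 0) ∧
      Tendsto (fun k => y (2 * k)) atTop atTop ∧
      Tendsto (fun k => y (2 * k + 1)) atTop (𝓝 0) := by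
  have hratio (k : ℕ) : x (2 * (k + 1)) / x (2 * k) =
      (α₁ + β₁ * (x (2 * k + 1) / y (2 * k + 1))) / (α₀ + β₀ * (x (2 * k) / y (2 * k))) := by
    rw [show 2 * (k + 1) = 2 * k + 2 by ring, ← h₀, ← h₁, mul_comm (x (2 * k + 1)) (x (2 * k)),
      mul_div_mul_right _ _ (hx _).ne']
  have hx_even : Tendsto (fun k => x (2 * k)) atTop atTop := by
    refine tendsto_atTop_of_tendsto_ratio (fun k => hx _) ((one_lt_div hα₀).2 hgrowth) ?_
    simp only [hratio]
    exact (hM.const_mul β₁ |>.const_add α₁).div (hL.const_mul β₀ |>.const_add α₀) hα₀.ne'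
  have hx_odd : Tendsto (fun k => x (2 * k + 1)) atTop (𝓝 0) := by
    have := (hL.const_mul β₀ |>.const_add α₀).mul hx_even.inv_tendsto_atTop
    rw [mul_zero] at this
    refine this.congr fun k => ?_
    rw [Pi.inv_apply, ← h₀, mul_inv_cancel_right₀ (hx _).ne']
  refine ⟨hx_even, hx_odd, ?_, ?_⟩
  · refine (hx_even.atTop_mul_pos (inv_pos.2 hL0) (hL.inv₀ hL0.ne')).congr fun k => ?_
    rw [← div_eq_mul_inv]
    exact div_div_cancel₀ (hx _).ne'
  · have := hx_odd.div hM hM0.ne'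
    rw [zero_div] at this
    exact this.congr fun k => div_div_cancel₀ (hx _).ne'

section Step

variable {a b c d x y x' y' : ℝ}

theorem div_eq_mobius_of_step (hx : 0 < x) (hy : 0 < y) (hc : 0 < c) (hd : 0 < d)
    (hx' : x' = a / x + b / y) (hy' : y' = c / x + d / y) :
    x' / y' = mobius b a d c (x / y) := by
  rw [hx', hy', mobius]
  field_simp
  ring

theorem mul_eq_of_step (hx : x ≠ 0) (hy : y ≠ 0) (hx' : x' = a / x + b / y) :
    x' * x = a + b * (x / y) := by
  rw [hx']
  field_simp

end Step

theorem apply_two_mul {α : Type*} {f : ℕ → α} (hf : ∀ n, f (n + 2) = f n) (k : ℕ) :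
    f (2 * k) = f 0 := by
  simpa [mul_comm] using Function.Periodic.nat_mul_eq hf k

theorem apply_two_mul_add_one {α : Type*} {f : ℕ → α} (hf : ∀ n, f (n + 2) = f n) (k : ℕ) :
    f (2 * k + 1) = f 1 := by
  simpa [add_comm, mul_comm] using Function.Periodic.nat_mul hf k 1

structure IsPeriodicOrbit (a b c d x y : ℕ → ℝ) : Prop where
  x_zero_pos : 0 < x 0
  y_zero_pos : 0 < y 0
  a_pos : ∀ n, 0 < a n
  b_pos : ∀ n, 0 < b n
  c_pos : ∀ n, 0 < c n
  d_pos : ∀ n, 0 < d n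
  a_periodic : ∀ n, a (n + 2) = a n
  b_periodic : ∀ n, b (n + 2) = b n
  c_periodic : ∀ n, c (n + 2) = c n
  d_periodic : ∀ n, d (n + 2) = d n
  x_succ : ∀ n, x (n + 1) = a n / x n + b n / y n
  y_succ : ∀ n, y (n + 1) = c n / x n + d n / y n

namespace IsPeriodicOrbit

variable {a b c d x y : ℕ → ℝ}

theorem pos (h : IsPeriodicOrbit a b c d x y) (n : ℕ) : 0 < x n ∧ 0 < y n := by
  induction n with
  | zero => exact ⟨h.x_zero_pos, h.y_zero_pos⟩
  | succ n ih =>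
    have := h.a_pos n; have := h.b_pos n; have := h.c_pos n; have := h.d_pos n
    obtain ⟨hx, hy⟩ := ih
    rw [h.x_succ, h.y_succ]
    constructor <;> positivity

theorem ratio_pos (h : IsPeriodicOrbit a b c d x y) (n : ℕ) : 0 < x n / y n :=
  div_pos (h.pos n).1 (h.pos n).2

theorem div_succ (h : IsPeriodicOrbit a b c d x y) (n : ℕ) :
    x (n + 1) / y (n + 1) = mobius (b n) (a n) (d n) (c n) (x n / y n) :=
  div_eq_mobius_of_step (h.pos n).1 (h.pos n).2 (h.c_pos n) (h.d_pos n) (h.x_succ n) (h.y_succ n)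

theorem mul_succ (h : IsPeriodicOrbit a b c d x y) (n : ℕ) :
    x (n + 1) * x n = a n + b n * (x n / y n) :=
  mul_eq_of_step (h.pos n).1.ne' (h.pos n).2.ne' (h.x_succ n)

theorem div_two_mul_add_one (h : IsPeriodicOrbit a b c d x y) (k : ℕ) :
    x (2 * k + 1) / y (2 * k + 1) = mobius (b 0) (a 0) (d 0) (c 0) (x (2 * k) / y (2 * k)) := by
  simpa only [apply_two_mul h.a_periodic, apply_two_mul h.b_periodic,
    apply_two_mul h.c_periodic, apply_two_mul h.d_periodic] using h.div_succ (2 * k)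

theorem div_two_mul_add_two (h : IsPeriodicOrbit a b c d x y) (k : ℕ) :
    x (2 * (k + 1)) / y (2 * (k + 1)) =
      mobius (a 1 * d 0 + b 0 * b 1) (a 0 * b 1 + a 1 * c 0) (b 0 * d 1 + c 1 * d 0)
        (a 0 * d 1 + c 0 * c 1) (x (2 * k) / y (2 * k)) := by
  have := h.c_pos 0; have := h.d_pos 0; have := h.ratio_pos (2 * k)
  rw [show 2 * (k + 1) = 2 * k + 1 + 1 by ring, h.div_succ, h.div_two_mul_add_one,
    apply_two_mul_add_one h.a_periodic, apply_two_mul_add_one h.b_periodic,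
    apply_two_mul_add_one h.c_periodic, apply_two_mul_add_one h.d_periodic,
    mobius_mobius (by positivity)]
  congr 1 <;> ring

theorem mul_two_mul (h : IsPeriodicOrbit a b c d x y) (k : ℕ) :
    x (2 * k + 1) * x (2 * k) = a 0 + b 0 * (x (2 * k) / y (2 * k)) := by
  rw [h.mul_succ, apply_two_mul h.a_periodic, apply_two_mul h.b_periodic]

theorem mul_two_mul_add_one (h : IsPeriodicOrbit a b c d x y) (k : ℕ) :
    x (2 * k + 2) * x (2 * k + 1) = a 1 + b 1 * (x (2 * k + 1) / y (2 * k + 1)) := by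
  rw [h.mul_succ, apply_two_mul_add_one h.a_periodic, apply_two_mul_add_one h.b_periodic]

theorem tendsto_div_two_mul (h : IsPeriodicOrbit a b c d x y) :
    Tendsto (fun k => x (2 * k) / y (2 * k)) atTop
      (𝓝 (perronSlope (a 1 * d 0 + b 0 * b 1) (a 0 * b 1 + a 1 * c 0) (b 0 * d 1 + c 1 * d 0)
        (a 0 * d 1 + c 0 * c 1))) := by
  have := h.a_pos 0; have := h.a_pos 1; have := h.b_pos 0; have := h.b_pos 1
  have := h.c_pos 0; have := h.c_pos 1; have := h.d_pos 0; have := h.d_pos 1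
  exact tendsto_mobius_iterate (by positivity) (by positivity) (by positivity) (by positivity)
    (fun k => (h.ratio_pos _).le) h.div_two_mul_add_two

end IsPeriodicOrbit

theorem stmt_18_general
    (x y a b c d : ℕ → ℝ)
    (hx0 : 0 < x 0) (hy0 : 0 < y 0)
    (hapos : ∀ n, 0 < a n) (hbpos : ∀ n, 0 < b n)
    (hcpos : ∀ n, 0 < c n) (hdpos : ∀ n, 0 < d n)
    (haper : ∀ n, a (n + 2) = a n) (hbper : ∀ n, b (n + 2) = b n)
    (hcper : ∀ n, c (n + 2) = c n) (hdper : ∀ n, d (n + 2) = d n)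
    (hxrec : ∀ n, x (n + 1) = a n / x n + b n / y n)
    (hyrec : ∀ n, y (n + 1) = c n / x n + d n / y n)
    (D lam1 lam2 : ℝ)
    (hD : D = Real.sqrt ((a 1 * d 0 + b 0 * b 1 - a 0 * d 1 - c 0 * c 1) ^ 2 +
      4 * (a 0 * b 1 + a 1 * c 0) * (b 0 * d 1 + c 1 * d 0)))
    (hlam1 : lam1 = (a 1 * d 0 + b 0 * b 1 + a 0 * d 1 + c 0 * c 1 + D) / 2)
    (hlam2 : lam2 = (a 1 * d 0 + b 0 * b 1 + a 0 * d 1 + c 0 * c 1 - D) / 2)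
    (C1 C3 : ℝ)
    (hC1 : C1 = (a 0 * b 1 + a 1 * c 0) / (lam1 - lam2) *
      ((b 0 * d 1 + c 1 * d 0) / (lam1 - (a 1 * d 0 + b 0 * b 1)) * x 0 + y 0))
    (hC3 : C3 = ((b 0 * d 1 + c 1 * d 0) * x 0 + (lam1 - (a 1 * d 0 + b 0 * b 1)) * y 0) /
      (lam1 - lam2))
    (hgt : 0 < C1 * lam1 / C3 - (b 0 * (C1 / C3) + a 0) * (d 0 * (C1 / C3) + c 0))
    : Tendsto (fun n => x (2 * n)) atTop atTop ∧
      Tendsto (fun n => x (2 * n + 1)) atTop (nhds 0) ∧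
      Tendsto (fun n => y (2 * n)) atTop atTop ∧
      Tendsto (fun n => y (2 * n + 1)) atTop (nhds 0) := by
  have h : IsPeriodicOrbit a b c d x y := ⟨hx0, hy0, hapos, hbpos, hcpos, hdpos,
    haper, hbper, hcper, hdper, hxrec, hyrec⟩
  have hμ : lam1 = perronRoot (a 1 * d 0 + b 0 * b 1) (a 0 * b 1 + a 1 * c 0)
      (b 0 * d 1 + c 1 * d 0) (a 0 * d 1 + c 0 * c 1) := by
    rw [hlam1, hD, perronRoot]; ring_nf
  have hL := h.tendsto_div_two_mul
  set p := a 1 * d 0 + b 0 * b 1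
  set q := a 0 * b 1 + a 1 * c 0
  set u := b 0 * d 1 + c 1 * d 0
  set s := a 0 * d 1 + c 0 * c 1 with hs
  have := hapos 0; have := hapos 1; have := hbpos 0; have := hbpos 1
  have := hcpos 0; have := hcpos 1; have := hdpos 0; have := hdpos 1
  have hqu : 0 < q * u := by positivity
  have hpμ : p < lam1 := hμ ▸ left_lt_perronRoot hqu
  have hsμ : s < lam1 := hμ ▸ right_lt_perronRoot hqu
  have hL0 : 0 < perronSlope p q u s := perronSlope_pos (by positivity) (by positivity)
  have hgap : 0 < lam1 - lam2 := by linarith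
  have hC3pos : 0 < C3 := by rw [hC3]; exact div_pos (by positivity) hgap
  have hC : C1 / C3 = perronSlope p q u s := by
    rw [div_eq_iff hC3pos.ne', hC1, hC3, perronSlope, ← hμ]
    field_simp [(sub_pos.2 hpμ).ne']
  rw [mul_div_right_comm, hC] at hgt
  have hM : Tendsto (fun k => x (2 * k + 1) / y (2 * k + 1)) atTop
      (𝓝 (mobius (b 0) (a 0) (d 0) (c 0) (perronSlope p q u s))) := by
    simpa only [h.div_two_mul_add_one] using hL.mobius (by positivity)
  refine tendsto_even_atTop_odd_zero (fun n => (h.pos n).1) h.mul_two_mul h.mul_two_mul_add_one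
    hL hM hL0 (by rw [mobius]; positivity) (by positivity) ?_
  have hden : 0 < d 0 * perronSlope p q u s + c 0 := by positivity
  rw [add_mul_mobius_eq_div (hμ ▸ mul_perronSlope_add_eq_perronRoot_mul hqu) hden.ne',
    lt_div_iff₀ hden]
  linarith

theorem stmt_18
    (x y a b c d : ℕ → ℝ)
    (hx0 : 0 < x 0) (hy0 : 0 < y 0)
    (hapos : ∀ n, 0 < a n) (hbpos : ∀ n, 0 < b n)
    (hcpos : ∀ n, 0 < c n) (hdpos : ∀ n, 0 < d n)
    (haper : ∀ n, a (n + 2) = a n) (hbper : ∀ n, b (n + 2) = b n)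
    (hcper : ∀ n, c (n + 2) = c n) (hdper : ∀ n, d (n + 2) = d n)
    (hxrec : ∀ n, x (n + 1) = a n / x n + b n / y n)
    (hyrec : ∀ n, y (n + 1) = c n / x n + d n / y n)
    (A : Matrix (Fin 2) (Fin 2) ℝ)
    (hAdef : A = !![a 1 * d 0 + b 0 * b 1, a 0 * b 1 + a 1 * c 0;
                    b 0 * d 1 + c 1 * d 0, a 0 * d 1 + c 0 * c 1])
    (hA : IsUnit A)
    (D lam1 lam2 : ℝ)
    (hD : D = Real.sqrt ((a 1 * d 0 + b 0 * b 1 - a 0 * d 1 - c 0 * c 1) ^ 2 +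
      4 * (a 0 * b 1 + a 1 * c 0) * (b 0 * d 1 + c 1 * d 0)))
    (hlam1 : lam1 = (a 1 * d 0 + b 0 * b 1 + a 0 * d 1 + c 0 * c 1 + D) / 2)
    (hlam2 : lam2 = (a 1 * d 0 + b 0 * b 1 + a 0 * d 1 + c 0 * c 1 - D) / 2)
    (C1 C3 : ℝ)
    (hC1 : C1 = (a 0 * b 1 + a 1 * c 0) / (lam1 - lam2) *
      ((b 0 * d 1 + c 1 * d 0) / (lam1 - (a 1 * d 0 + b 0 * b 1)) * x 0 + y 0))
    (hC3 : C3 = ((b 0 * d 1 + c 1 * d 0) * x 0 + (lam1 - (a 1 * d 0 + b 0 * b 1)) * y 0) /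
      (lam1 - lam2))
    (hgt : 0 < C1 * lam1 / C3 - (b 0 * (C1 / C3) + a 0) * (d 0 * (C1 / C3) + c 0))
    : Tendsto (fun n => x (2 * n)) atTop atTop ∧
      Tendsto (fun n => x (2 * n + 1)) atTop (nhds 0) ∧
      Tendsto (fun n => y (2 * n)) atTop atTop ∧
      Tendsto (fun n => y (2 * n + 1)) atTop (nhds 0) :=
  stmt_18_general x y a b c d hx0 hy0 hapos hbpos hcpos hdpos haper hbper hcper hdper hxrec hyrec D
    lam1 lam2 hD hlam1 hlam2 C1 C3 hC1 hC3 hgt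
end
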